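/- arXiv:1509.02841 — 2 statements merged into one kernel-verified Lean document; each statement's English description precedes it below -/
import Mathlib

section
/- Let G be a strongly connected directed graph and (x,y) an edge such that x and y lie in the same 2-edge-connected block of G. Then G \ (x,y) has the same 2-edge-connected blocks as G if and only if G \ (x,y) contains two edge-disjoint directed paths from x to y. -/
variable {V : Type*}

/-- A walk in a digraph given by its edge set `E`, recorded as a list of edges. -/
inductive IsWalk (E : Set (V × V)) : V → V → List (V × V) → Prop
  | nil (u : V) : IsWalk E u u []
  | cons {u v w : V} {p : List (V × V)} (h : (u, v) ∈ E) (hp : IsWalk E v w p) :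
      IsWalk E u w ((u, v) :: p)

def Reaches (E : Set (V × V)) (u v : V) : Prop := ∃ p, IsWalk E u v p

def StronglyConnected (E : Set (V × V)) : Prop := ∀ u v : V, Reaches E u v

/-- Two edge-disjoint directed paths from `u` to `v`. -/
def TwoEDP (E : Set (V × V)) (u v : V) : Prop :=
  ∃ p q, IsWalk E u v p ∧ IsWalk E u v q ∧ p.Disjoint q

/-- `u` and `v` are 2-edge-connected. -/
def TwoEC (E : Set (V × V)) (u v : V) : Prop := TwoEDP E u v ∧ TwoEDP E v u

/-- A 2-edge-connected block: a maximal set of pairwise 2-edge-connected vertices. -/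
def Is2ECBlock (E : Set (V × V)) (B : Set V) : Prop :=
  (∀ u ∈ B, ∀ v ∈ B, TwoEC E u v) ∧
    ∀ C : Set V, B ⊆ C → (∀ u ∈ C, ∀ v ∈ C, TwoEC E u v) → C = B

def SameBlocks (E E' : Set (V × V)) : Prop :=
  ∀ B : Set V, Is2ECBlock E B ↔ Is2ECBlock E' B

/-- A strong bridge: an edge whose removal increases the number of strongly
connected components, i.e. destroys the mutual reachability of some pair. -/
def IsStrongBridge (E : Set (V × V)) (e : V × V) : Prop :=
  e ∈ E ∧ ∃ u v : V, (Reaches E u v ∧ Reaches E v u) ∧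
    ¬ (Reaches (E \ {e}) u v ∧ Reaches (E \ {e}) v u)

/-- A 2-edge-connected digraph: strongly connected and stays so after deleting any edge. -/
def Is2ECGraph (E : Set (V × V)) : Prop :=
  StronglyConnected E ∧ ∀ e ∈ E, StronglyConnected (E \ {e})

/-- Edges of `E` induced on the vertex set `C`. -/
def restrictE (E : Set (V × V)) (C : Set V) : Set (V × V) :=
  {e ∈ E | e.1 ∈ C ∧ e.2 ∈ C}

def SCOn (E' : Set (V × V)) (C : Set V) : Prop :=
  ∀ u ∈ C, ∀ v ∈ C, Reaches E' u v

/-- `E'` is a 2-edge-connected (spanning sub)graph on the vertex set `C`. -/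
def Is2ECOn (E' : Set (V × V)) (C : Set V) : Prop :=
  SCOn E' C ∧ ∀ e ∈ E', SCOn (E' \ {e}) C

/-- A 2-edge-connected component: a maximal vertex set inducing a 2-edge-connected subgraph. -/
def Is2ECComponent (E : Set (V × V)) (C : Set V) : Prop :=
  Is2ECOn (restrictE E C) C ∧
    ∀ D : Set V, C ⊆ D → Is2ECOn (restrictE E D) D → D = C

/-- A solution to 2EC-B: a strongly connected spanning subgraph with the same
2-edge-connected blocks. -/
def IsSolutionB (E E' : Set (V × V)) : Prop :=
  E' ⊆ E ∧ StronglyConnected E' ∧ SameBlocks E' E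

/-- The reverse digraph. -/
def revE (E : Set (V × V)) : Set (V × V) := {e | (e.2, e.1) ∈ E}

/-- A bridge of the flow graph with start vertex `s`: an edge contained in every
walk from `s` to its head. -/
def IsBridge (E : Set (V × V)) (s : V) (e : V × V) : Prop :=
  e ∈ E ∧ ∀ p, IsWalk E s e.2 p → e ∈ p

/-- `u` is a vertex of the walk `p` starting at `s`. -/
def OnWalk (s : V) (p : List (V × V)) (u : V) : Prop :=
  u = s ∨ ∃ e ∈ p, e.2 = u

/-- `u` dominates `w` in the flow graph with start `s`. -/
def Dom (E : Set (V × V)) (s u w : V) : Prop :=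
  ∀ p, IsWalk E s w p → OnWalk s p u

def PDom (E : Set (V × V)) (s u w : V) : Prop := Dom E s u w ∧ u ≠ w

/-- `u` is the immediate dominator of `w`. -/
def Idom (E : Set (V × V)) (s u w : V) : Prop :=
  PDom E s u w ∧ ∀ x, PDom E s x w → Dom E s x u

/-- Marked vertices: roots of the trees of the canonical decomposition of the
dominator tree, i.e. `s` and the heads of bridges of `G(s)`. -/
def Marked (E : Set (V × V)) (s r : V) : Prop :=
  r = s ∨ ∃ e, IsBridge E s e ∧ e.2 = r

/-- `w` belongs to the tree `T(r)` of the canonical decomposition: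
`r` is the nearest marked dominator of `w`. -/
def InTree (E : Set (V × V)) (s r w : V) : Prop :=
  Marked E s r ∧ Dom E s r w ∧ ∀ x, Marked E s x → Dom E s x w → Dom E s x r

/-- A spanning tree of the flow graph `G(s)` rooted at `s`. -/
def IsSpanningTree (E : Set (V × V)) (s : V) (T : Set (V × V)) : Prop :=
  T ⊆ E ∧ (∀ v, Reaches T s v) ∧ (∀ v, v ≠ s → ∃! e, e ∈ T ∧ e.2 = v) ∧
    ∀ e ∈ T, e.2 ≠ s

/-- Two independent spanning trees: for every `v`, the two tree paths from `s`
to `v` share only dominators of `v`. -/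
def IndependentTrees (E : Set (V × V)) (s : V) (T₁ T₂ : Set (V × V)) : Prop :=
  IsSpanningTree E s T₁ ∧ IsSpanningTree E s T₂ ∧
    ∀ v p q, IsWalk T₁ s v p → IsWalk T₂ s v q →
      ∀ u, OnWalk s p u → OnWalk s q u → Dom E s u v

/-- The contraction map defining the first-level auxiliary graph `G_r`:
vertices of `T(r)` stay put, descendants of a marked child `x` of a boundary
vertex of `T(r)` are contracted into `x`, and non-descendants of `r` are
contracted into `d(r)`. -/
def ContractsTo (E : Set (V × V)) (s r v x : V) : Prop :=
  (InTree E s r v ∧ x = v) ∨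
  (Dom E s r v ∧ ¬ InTree E s r v ∧ Marked E s x ∧ Dom E s x v ∧
    ∃ u, InTree E s r u ∧ Idom E s u x) ∨
  (¬ Dom E s r v ∧ Idom E s x r)

/-- The edge set of the first-level auxiliary graph `G_r`. -/
def AuxE (E : Set (V × V)) (s r : V) : Set (V × V) :=
  {e | ∃ a b, (a, b) ∈ E ∧ ContractsTo E s r a e.1 ∧ ContractsTo E s r b e.2}

def cutEdges (E : Set (V × V)) (U W : Set V) : Set (V × V) :=
  {e ∈ E | e.1 ∈ U ∧ e.2 ∈ W}

def IsCut (u w : V) (U W : Set V) : Prop := u ∈ U ∧ w ∈ W ∧ Disjoint U W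

def IsMinCut (E : Set (V × V)) (u w : V) (U W : Set V) : Prop :=
  IsCut u w U W ∧ ∀ U' W' : Set V, IsCut u w U' W' →
    (cutEdges E U W).ncard ≤ (cutEdges E U' W').ncard

/-- There exist `k` pairwise edge-disjoint walks from `u` to `w`. -/
def HasEDP (E : Set (V × V)) (u w : V) (k : ℕ) : Prop :=
  ∃ P : Fin k → List (V × V), (∀ i, IsWalk E u w (P i)) ∧
    ∀ i j, i ≠ j → (P i).Disjoint (P j)

/-- The (loop-free, simple) quotient of the inter-component edges `F` under the
component map `h`. -/
def quotE {V' : Type*} (h : V → V') (F : Set (V × V)) : Set (V' × V') :=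
  {q | ∃ e ∈ F, h e.1 = q.1 ∧ h e.2 = q.2 ∧ q.1 ≠ q.2}

/-- A solution to 2EC-C: a strongly connected spanning subgraph with the same
2-edge-connected components. -/
def IsSolutionC (E E' : Set (V × V)) : Prop :=
  E' ⊆ E ∧ StronglyConnected E' ∧
    ∀ C : Set V, Is2ECComponent E C ↔ Is2ECComponent E' C

/-- One step of the deletion process: delete an edge `(x,y)` such that two
edge-disjoint `x → y` paths remain. -/
def DelStep (E₁ E₂ : Set (V × V)) : Prop :=
  ∃ x y : V, (x, y) ∈ E₁ ∧ E₂ = E₁ \ {(x, y)} ∧ TwoEDP E₂ x y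

/-!
If the blocks survive, `x` and `y`, lying in a common block, stay 2-edge-connected after the
deletion. Conversely, let `u, v` be 2-edge-connected in `G`. Any cut separating `u` from `v`
contains two edges of `G`; if one of them is `(x, y)`, the cut separates `x` from `y`, so the two
edge-disjoint `x → y` paths of `G \ (x, y)` supply two other edges. Hence every `u`–`v` cut keeps
two edges after the deletion, and Menger's theorem for two paths (one augmenting-path step
followed by a flow decomposition) restores two edge-disjoint `u → v` paths.
-/

namespace IsWalk

variable {T T' : Set (V × V)} {a b c : V} {p : List (V × V)}

theorem mem (hp : IsWalk T a b p) {e : V × V} (he : e ∈ p) : e ∈ T := by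
  induction hp with
  | nil => simp at he
  | cons h _ ih =>
    rcases List.mem_cons.mp he with rfl | he
    exacts [h, ih he]

theorem of_forall_mem (hp : IsWalk T a b p) (h : ∀ e ∈ p, e ∈ T') : IsWalk T' a b p := by
  induction hp with
  | nil u => exact .nil u
  | cons _ _ ih =>
    exact .cons (h _ List.mem_cons_self) (ih fun e he => h e (List.mem_cons_of_mem _ he))

theorem mono (hp : IsWalk T a b p) (hT : T ⊆ T') : IsWalk T' a b p :=
  hp.of_forall_mem fun _ he => hT (hp.mem he)

theorem append {q : List (V × V)} (hp : IsWalk T a b p) (hq : IsWalk T b c q) :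
    IsWalk T a c (p ++ q) := by
  induction hp with
  | nil => exact hq
  | cons h _ ih => exact .cons h (ih hq)

theorem exists_eq_append_cons (hp : IsWalk T a b p) {e : V × V} (he : e ∈ p) :
    ∃ p₁ p₂, p = p₁ ++ e :: p₂ ∧ IsWalk T e.2 b p₂ := by
  induction hp with
  | nil => simp at he
  | @cons u v w rest _ hrest ih =>
    rcases List.mem_cons.mp he with rfl | he
    · exact ⟨[], rest, rfl, hrest⟩
    · obtain ⟨p₁, p₂, rfl, hp₂⟩ := ih he
      exact ⟨(u, v) :: p₁, p₂, rfl, hp₂⟩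

theorem exists_leaving (hp : IsWalk T a b p) {U : Set V} (ha : a ∈ U) (hb : b ∉ U) :
    ∃ e ∈ p, e.1 ∈ U ∧ e.2 ∉ U := by
  induction hp with
  | nil => exact absurd ha hb
  | @cons u v _ _ _ _ ih =>
    by_cases hv : v ∈ U
    · obtain ⟨e, he, hleave⟩ := ih hv hb
      exact ⟨e, List.mem_cons_of_mem _ he, hleave⟩
    · exact ⟨(u, v), List.mem_cons_self, ha, hv⟩

theorem forall_fst_notMem (hp : IsWalk T a b p) {U : Set V} (ha : a ∉ U)
    (hU : ∀ e ∈ p, e.1 ∉ U → e.2 ∉ U) : ∀ e ∈ p, e.1 ∉ U := by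
  induction hp with
  | nil => simp
  | cons _ _ ih =>
    have hv := hU _ List.mem_cons_self ha
    rintro e (_ | ⟨_, he⟩)
    exacts [ha, ih hv (fun e he => hU e (List.mem_cons_of_mem _ he)) e he]

theorem subsingleton_leaving (hp : IsWalk T a b p) {U : Set V}
    (hU : ∀ e ∈ p, e.1 ∉ U → e.2 ∉ U) : {e | e ∈ p ∧ e.1 ∈ U ∧ e.2 ∉ U}.Subsingleton := by
  induction hp with
  | nil => simp [Set.Subsingleton]
  | @cons u v w rest _ hrest ih =>
    have hrestU : ∀ e ∈ rest, e.1 ∉ U → e.2 ∉ U := fun e he => hU e (List.mem_cons_of_mem _ he)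
    by_cases hleave : u ∈ U ∧ v ∉ U
    · have hout := hrest.forall_fst_notMem hleave.2 hrestU
      have honly : ∀ e, e ∈ (u, v) :: rest ∧ e.1 ∈ U ∧ e.2 ∉ U → e = (u, v) := by
        rintro e ⟨he | ⟨_, he⟩, h1, -⟩
        exacts [rfl, absurd h1 (hout e he)]
      exact fun e₁ h₁ e₂ h₂ => (honly e₁ h₁).trans (honly e₂ h₂).symm
    · have hrestOnly : ∀ e, e ∈ (u, v) :: rest ∧ e.1 ∈ U ∧ e.2 ∉ U →
          e ∈ rest ∧ e.1 ∈ U ∧ e.2 ∉ U := by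
        rintro e ⟨he | ⟨_, he⟩, h1, h2⟩
        exacts [absurd ⟨h1, h2⟩ hleave, ⟨he, h1, h2⟩]
      exact fun e₁ h₁ e₂ h₂ => ih hrestU (hrestOnly e₁ h₁) (hrestOnly e₂ h₂)

end IsWalk

theorem Reaches.exists_nodup {T : Set (V × V)} {a b : V} (h : Reaches T a b) :
    ∃ p, IsWalk T a b p ∧ p.Nodup := by
  obtain ⟨p, hp⟩ := h
  induction hp with
  | nil u => exact ⟨[], .nil u, List.nodup_nil⟩
  | @cons u v w rest huv _ ih =>
    obtain ⟨q, hq, hnd⟩ := ih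
    by_cases hm : (u, v) ∈ q
    · obtain ⟨q₁, q₂, rfl, hq₂⟩ := hq.exists_eq_append_cons hm
      exact ⟨(u, v) :: q₂, .cons huv hq₂, hnd.sublist (List.sublist_append_right _ _)⟩
    · exact ⟨(u, v) :: q, .cons huv hq, List.nodup_cons.mpr ⟨hm, hnd⟩⟩

theorem reaches_of_cutEdges_nonempty {T : Set (V × V)} {u v : V}
    (h : ∀ U : Set V, u ∈ U → v ∉ U → (cutEdges T U Uᶜ).Nonempty) : Reaches T u v := by
  by_contra huv
  obtain ⟨e, heT, he₁, he₂⟩ := h {w | Reaches T u w} ⟨[], .nil u⟩ huv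
  obtain ⟨p, hp⟩ := he₁
  exact he₂ ⟨p ++ [e], hp.append (.cons heT (.nil _))⟩

theorem TwoEDP.cutEdges_nontrivial {T : Set (V × V)} {u v : V} (h : TwoEDP T u v)
    {U : Set V} (hu : u ∈ U) (hv : v ∉ U) : (cutEdges T U Uᶜ).Nontrivial := by
  obtain ⟨p, q, hp, hq, hpq⟩ := h
  obtain ⟨e₁, he₁, hleave₁⟩ := hp.exists_leaving hu hv
  obtain ⟨e₂, he₂, hleave₂⟩ := hq.exists_leaving hu hv
  exact ⟨e₁, ⟨hp.mem he₁, hleave₁⟩, e₂, ⟨hq.mem he₂, hleave₂⟩,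
    fun h => hpq he₁ (h ▸ he₂)⟩

theorem TwoEDP.mono {T T' : Set (V × V)} {u v : V} (h : TwoEDP T u v) (hT : T ⊆ T') :
    TwoEDP T' u v :=
  let ⟨p, q, hp, hq, hpq⟩ := h
  ⟨p, q, hp.mono hT, hq.mono hT, hpq⟩

section NetOutflow

variable [DecidableEq V]

def netOutflow (F : Finset (V × V)) (w : V) : ℤ :=
  ∑ e ∈ F, ((if e.1 = w then 1 else 0) - if e.2 = w then 1 else 0)

theorem netOutflow_union {A B : Finset (V × V)} (h : Disjoint A B) (w : V) :
    netOutflow (A ∪ B) w = netOutflow A w + netOutflow B w :=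
  Finset.sum_union h

theorem netOutflow_sdiff {A B : Finset (V × V)} (h : B ⊆ A) (w : V) :
    netOutflow (A \ B) w = netOutflow A w - netOutflow B w :=
  Finset.sum_sdiff_eq_sub h

theorem netOutflow_image_swap (A : Finset (V × V)) (w : V) :
    netOutflow (A.image Prod.swap) w = -netOutflow A w := by
  rw [netOutflow, netOutflow, Finset.sum_image (fun _ _ _ _ h => Prod.swap_injective h),
    ← Finset.sum_neg_distrib]
  simp only [Prod.fst_swap, Prod.snd_swap, neg_sub]

theorem IsWalk.netOutflow_toFinset {T : Set (V × V)} {a b : V} {p : List (V × V)}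
    (hp : IsWalk T a b p) (hnd : p.Nodup) (w : V) :
    netOutflow p.toFinset w = (if a = w then 1 else 0) - if b = w then 1 else 0 := by
  induction hp with
  | nil => simp [netOutflow]
  | @cons u v _ rest _ _ ih =>
    obtain ⟨hnotMem, hnd⟩ := List.nodup_cons.mp hnd
    rw [List.toFinset_cons, netOutflow, Finset.sum_insert (List.mem_toFinset.not.mpr hnotMem),
      ← netOutflow, ih hnd]
    ring

theorem exists_mem_fst_eq_of_netOutflow_pos {F : Finset (V × V)} {a : V}
    (h : 0 < netOutflow F a) : ∃ e ∈ F, e.1 = a := by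
  by_contra! hF
  refine h.not_ge (Finset.sum_nonpos fun e he => ?_)
  simp only [if_neg (hF e he)]
  split_ifs <;> simp

/-- Greedily following unused out-edges from a vertex of positive net outflow can only get stuck
at `v`, the one vertex allowed a deficit. -/
theorem reaches_of_netOutflow_nonneg {F : Finset (V × V)} {a v : V}
    (hF : ∀ w ≠ v, 0 ≤ netOutflow F w) (ha : a ≠ v → 0 < netOutflow F a) :
    Reaches ↑F a v := by
  induction F using Finset.strongInduction generalizing a with
  | H F ih =>
    by_cases hav : a = v
    · exact hav ▸ ⟨[], .nil a⟩
    obtain ⟨⟨a, b⟩, heF, rfl⟩ := exists_mem_fst_eq_of_netOutflow_pos (ha hav)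
    have hpos : 0 < netOutflow F a := ha hav
    have herase : ∀ w, netOutflow (F.erase (a, b)) w =
        netOutflow F w - ((if a = w then 1 else 0) - if b = w then 1 else 0) :=
      fun w => Finset.sum_erase_eq_sub heF
    obtain ⟨p, hp⟩ := ih (F.erase (a, b)) (Finset.erase_ssubset heF) (a := b)
      (fun w hw => by rw [herase]; have := hF w hw; split_ifs <;> subst_vars <;> omega)
      (fun hv => by rw [herase, if_pos rfl]; have := hF b hv; split_ifs <;> subst_vars <;> omega)
    exact ⟨(a, b) :: p, .cons heF (hp.mono (Finset.coe_subset.mpr (Finset.erase_subset _ F)))⟩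

theorem reaches_of_netOutflow_eq {F : Finset (V × V)} {u v : V} {k : ℤ} (hk : 0 < k)
    (hF : ∀ w, netOutflow F w = k * ((if u = w then 1 else 0) - if v = w then 1 else 0)) :
    Reaches ↑F u v :=
  reaches_of_netOutflow_nonneg
    (fun w hw => by rw [hF, if_neg (Ne.symm hw)]; split_ifs <;> omega)
    (fun huv => by rw [hF, if_pos rfl, if_neg (Ne.symm huv)]; omega)

theorem twoEDP_of_netOutflow_eq (F : Finset (V × V)) {u v : V}
    (hF : ∀ w, netOutflow F w = 2 * ((if u = w then 1 else 0) - if v = w then 1 else 0)) :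
    TwoEDP ↑F u v := by
  obtain ⟨p, hp, hnd⟩ := (reaches_of_netOutflow_eq two_pos hF).exists_nodup
  have hpF : p.toFinset ⊆ F := fun e he => hp.mem (List.mem_toFinset.mp he)
  obtain ⟨q, hq⟩ := reaches_of_netOutflow_eq one_pos (F := F \ p.toFinset) (u := u) (v := v) fun w => by
    rw [netOutflow_sdiff hpF, hF, hp.netOutflow_toFinset hnd]
    ring
  refine ⟨p, q, hp, hq.mono (Finset.coe_subset.mpr Finset.sdiff_subset), fun e hep heq => ?_⟩
  exact (Finset.mem_sdiff.mp (hq.mem heq)).2 (List.mem_toFinset.mpr hep)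

end NetOutflow

section Augmentation

variable [DecidableEq V]

/-- The residual graph of `S` after sending one unit of flow along `p`. -/
def residualEdges (S : Finset (V × V)) (p : List (V × V)) : Finset (V × V) :=
  S \ p.toFinset ∪ p.toFinset.image Prod.swap

theorem reaches_residualEdges {S : Finset (V × V)} {u v : V} {p : List (V × V)}
    (hp : IsWalk ↑S u v p)
    (hcut : ∀ U : Set V, u ∈ U → v ∉ U → (cutEdges ↑S U Uᶜ).Nontrivial) :
    Reaches ↑(residualEdges S p) u v := by
  refine reaches_of_cutEdges_nonempty fun U hu hv => ?_
  by_contra hempty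
  have hnoexit : ∀ e ∈ residualEdges S p, e.1 ∈ U → e.2 ∈ U := fun e he h₁ => by
    by_contra h₂; exact hempty ⟨e, he, h₁, h₂⟩
  have hnoentry : ∀ e ∈ p, e.1 ∉ U → e.2 ∉ U := fun e he h₁ h₂ => h₁ <|
    hnoexit e.swap (Finset.mem_union_right _ (Finset.mem_image_of_mem _
      (List.mem_toFinset.mpr he))) h₂
  refine (hcut U hu hv).not_subsingleton ((hp.subsingleton_leaving hnoentry).anti ?_)
  rintro e ⟨heS, h₁, h₂⟩
  by_contra hep
  exact h₂ (hnoexit e (Finset.mem_union_left _ (Finset.mem_sdiff.mpr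
    ⟨heS, fun h => hep ⟨List.mem_toFinset.mp h, h₁, h₂⟩⟩)) h₁)

/-- Cancelling the edges that `p₂` traverses against `p₁` leaves a flow of value two in `S`. -/
theorem twoEDP_of_isWalk_residualEdges {S : Finset (V × V)} {u v : V} {p₁ p₂ : List (V × V)}
    (hp₁ : IsWalk ↑S u v p₁) (hnd₁ : p₁.Nodup)
    (hp₂ : IsWalk ↑(residualEdges S p₁) u v p₂) (hnd₂ : p₂.Nodup) : TwoEDP ↑S u v := by
  set P₁ := p₁.toFinset
  set P₂ := p₂.toFinset
  set B := P₂ ∩ P₁.image Prod.swap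
  have hBP₂ : B ⊆ P₂ := Finset.inter_subset_left
  have hBP₁ : B.image Prod.swap ⊆ P₁ := by
    intro e he
    simp only [B, Finset.mem_image, Finset.mem_inter] at he
    obtain ⟨_, ⟨-, f, hf, rfl⟩, rfl⟩ := he
    simpa using hf
  have hP₂B : P₂ \ B ⊆ S \ P₁ := by
    intro e he
    obtain ⟨heP₂, heB⟩ := Finset.mem_sdiff.mp he
    rcases Finset.mem_union.mp (hp₂.mem (List.mem_toFinset.mp heP₂)) with h | h
    exacts [h, absurd (Finset.mem_inter.mpr ⟨heP₂, h⟩) heB]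
  have hdisj : Disjoint (P₁ \ B.image Prod.swap) (P₂ \ B) :=
    Finset.disjoint_of_subset_left Finset.sdiff_subset
      (Finset.disjoint_of_subset_right hP₂B Finset.disjoint_sdiff)
  have hFS : P₁ \ B.image Prod.swap ∪ (P₂ \ B) ⊆ S :=
    Finset.union_subset (Finset.sdiff_subset.trans fun e he => hp₁.mem (List.mem_toFinset.mp he))
      (hP₂B.trans Finset.sdiff_subset)
  refine (twoEDP_of_netOutflow_eq _ fun w => ?_).mono (Finset.coe_subset.mpr hFS)
  rw [netOutflow_union hdisj, netOutflow_sdiff hBP₁, netOutflow_sdiff hBP₂,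
    netOutflow_image_swap, hp₁.netOutflow_toFinset hnd₁, hp₂.netOutflow_toFinset hnd₂]
  ring

end Augmentation

theorem twoEDP_of_cutEdges_nontrivial {S : Set (V × V)} (hS : S.Finite) {u v : V}
    (hcut : ∀ U : Set V, u ∈ U → v ∉ U → (cutEdges S U Uᶜ).Nontrivial) : TwoEDP S u v := by
  classical
  lift S to Finset (V × V) using hS
  obtain ⟨p₁, hp₁, hnd₁⟩ := (reaches_of_cutEdges_nonempty fun U hu hv =>
    (hcut U hu hv).nonempty).exists_nodup
  obtain ⟨p₂, hp₂, hnd₂⟩ := (reaches_residualEdges hp₁ hcut).exists_nodup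
  exact twoEDP_of_isWalk_residualEdges hp₁ hnd₁ hp₂ hnd₂

/-- Two edge-disjoint `x → y` paths avoiding `(x, y)` cross every cut that `(x, y)` crosses, so
after deleting `(x, y)` every `u`–`v` cut still has two edges. -/
theorem TwoEDP.sdiff_singleton {E : Set (V × V)} {x y u v : V}
    (hxy : TwoEDP (E \ {(x, y)}) x y) (huv : TwoEDP E u v) : TwoEDP (E \ {(x, y)}) u v := by
  obtain ⟨p, q, hp, hq, hpq⟩ := huv
  obtain ⟨p₀, q₀, hp₀, hq₀, hpq₀⟩ := hxy
  set T := E \ {(x, y)} ∩ {e | e ∈ p ++ q ++ p₀ ++ q₀}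
  have hmemT : ∀ {a b : V} {l : List (V × V)}, IsWalk E a b l → l ⊆ p ++ q ++ p₀ ++ q₀ →
      ∀ e ∈ l, e ≠ (x, y) → e ∈ T :=
    fun hl hsub e he hne => ⟨⟨hl.mem he, hne⟩, hsub he⟩
  have hT₀ : TwoEDP T x y := ⟨p₀, q₀,
    hp₀.of_forall_mem fun e he => ⟨hp₀.mem he, by simp [he]⟩,
    hq₀.of_forall_mem fun e he => ⟨hq₀.mem he, by simp [he]⟩, hpq₀⟩
  have hT : TwoEDP (insert (x, y) T) u v := ⟨p, q,
    hp.of_forall_mem fun e he => or_iff_not_imp_left.mpr (hmemT hp (by simp +contextual) e he),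
    hq.of_forall_mem fun e he => or_iff_not_imp_left.mpr (hmemT hq (by simp +contextual) e he),
    hpq⟩
  have hTfin : T.Finite := (List.finite_toSet _).subset Set.inter_subset_right
  refine (twoEDP_of_cutEdges_nontrivial hTfin fun U hu hv => ?_).mono Set.inter_subset_left
  by_cases hleave : x ∈ U ∧ y ∉ U
  · exact hT₀.cutEdges_nontrivial hleave.1 hleave.2
  · refine (hT.cutEdges_nontrivial hu hv).mono ?_
    rintro e ⟨rfl | he, h₁, h₂⟩
    exacts [absurd ⟨h₁, h₂⟩ hleave, ⟨he, h₁, h₂⟩]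

theorem sameBlocks_of_twoEC_iff {E E' : Set (V × V)} (h : ∀ a b, TwoEC E a b ↔ TwoEC E' a b) :
    SameBlocks E E' := by
  intro B
  simp only [Is2ECBlock, h]

theorem stmt1_general (E : Set (V × V)) (x y : V)
    (hblock : ∃ B : Set V, Is2ECBlock E B ∧ x ∈ B ∧ y ∈ B) :
    SameBlocks (E \ {(x, y)}) E ↔ TwoEDP (E \ {(x, y)}) x y := by
  constructor
  · obtain ⟨B, hB, hxB, hyB⟩ := hblock
    exact fun hsame => (((hsame B).mpr hB).1 x hxB y hyB).1
  · intro hxy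
    refine sameBlocks_of_twoEC_iff fun a b => ⟨fun h => ?_, fun h => ?_⟩
    · exact ⟨h.1.mono Set.sdiff_subset, h.2.mono Set.sdiff_subset⟩
    · exact ⟨hxy.sdiff_singleton h.1, hxy.sdiff_singleton h.2⟩

theorem stmt1 (E : Set (V × V)) (x y : V)
    (hSC : StronglyConnected E) (hxy : (x, y) ∈ E)
    (hblock : ∃ B : Set V, Is2ECBlock E B ∧ x ∈ B ∧ y ∈ B) :
    SameBlocks (E \ {(x, y)}) E ↔ TwoEDP (E \ {(x, y)}) x y :=
  stmt1_general E x y hblock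
end

section
/- If there exists a polynomial-time 3/2-approximation for the smallest 2-edge-connected spanning subgraph of a 2-edge-connected digraph and a polynomial-time 3/2-approximation for the smallest strongly connected spanning subgraph, then there is a polynomial-time 3/2-approximation for the smallest strongly connected spanning subgraph preserving the 2-edge-connected components: apply the first within each 2-edge-connected component and the second on the condensed graph with loops and parallel edges removed, then expand. -/
variable {V : Type*}

/-! Edges of any 2EC-C solution split into edges inside a 2-edge-connected component and edges
between components. Inside a component `C` the solution restricts to a 2-edge-connected spanning
subgraph of `C`, and the edges between components project onto a strongly connected spanning
subgraph of the condensed graph, so the two 3/2-guarantees add up. Conversely `K` makes each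
fibre of `h` 2-edge-connected and `F` strongly connects the fibres, so `F ∪ K` is strongly
connected; its 2-edge-connected components are again the fibres, because two overlapping
2-edge-connected vertex sets have a 2-edge-connected union. -/

theorem IsWalk.mono_s13 {E E' : Set (V × V)} (hE : E ⊆ E') {u v : V} {p : List (V × V)}
    (hp : IsWalk E u v p) : IsWalk E' u v p := by
  induction hp with
  | nil u => exact .nil u
  | cons he _ ih => exact .cons (hE he) ih

theorem IsWalk.append_s13 {E : Set (V × V)} {u v w : V} {p q : List (V × V)}
    (hp : IsWalk E u v p) (hq : IsWalk E v w q) : IsWalk E u w (p ++ q) := by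
  induction hp with
  | nil u => exact hq
  | cons he _ ih => exact .cons he (ih hq)

namespace Reaches

variable {E : Set (V × V)} {u v w : V}

theorem refl (E : Set (V × V)) (u : V) : Reaches E u u := ⟨[], .nil u⟩

theorem of_mem (he : (u, v) ∈ E) : Reaches E u v := ⟨[(u, v)], .cons he (.nil v)⟩

theorem mono_s13 {E' : Set (V × V)} (hE : E ⊆ E') : Reaches E u v → Reaches E' u v
  | ⟨p, hp⟩ => ⟨p, hp.mono_s13 hE⟩

theorem trans : Reaches E u v → Reaches E v w → Reaches E u w
  | ⟨p, hp⟩, ⟨q, hq⟩ => ⟨p ++ q, hp.append_s13 hq⟩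

end Reaches

namespace SCOn

variable {L M : Set (V × V)} {C D : Set V}

theorem mono_s13 (hLM : L ⊆ M) (hL : SCOn L C) : SCOn M C :=
  fun u hu v hv => (hL u hu v hv).mono_s13 hLM

theorem union {w : V} (hL : SCOn L C) (hM : SCOn M D) (hwC : w ∈ C) (hwD : w ∈ D) :
    SCOn (L ∪ M) (C ∪ D) := by
  have through_w : ∀ u ∈ C ∪ D, Reaches (L ∪ M) u w ∧ Reaches (L ∪ M) w u := by
    rintro u (hu | hu)
    · exact ⟨(hL u hu w hwC).mono_s13 Set.subset_union_left,
        (hL w hwC u hu).mono_s13 Set.subset_union_left⟩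
    · exact ⟨(hM u hu w hwD).mono_s13 Set.subset_union_right,
        (hM w hwD u hu).mono_s13 Set.subset_union_right⟩
  exact fun u hu v hv => (through_w u hu).1.trans (through_w v hv).2

end SCOn

namespace Is2ECOn

variable {L M : Set (V × V)} {C D : Set V}

theorem scOn_diff (hL : Is2ECOn L C) (e : V × V) : SCOn (L \ {e}) C := by
  by_cases he : e ∈ L
  · exact hL.2 e he
  · rw [Set.sdiff_singleton_eq_self he]
    exact hL.1

theorem mono_s13 (hLM : L ⊆ M) (hL : Is2ECOn L C) : Is2ECOn M C :=
  ⟨hL.1.mono_s13 hLM, fun e _ => (hL.scOn_diff e).mono_s13 (Set.sdiff_subset_sdiff_left hLM)⟩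

theorem union {w : V} (hL : Is2ECOn L C) (hM : Is2ECOn M D) (hwC : w ∈ C) (hwD : w ∈ D) :
    Is2ECOn (L ∪ M) (C ∪ D) := by
  refine ⟨hL.1.union hM.1 hwC hwD, fun e _ => ?_⟩
  rw [Set.union_sdiff_distrib]
  exact (hL.scOn_diff e).union (hM.scOn_diff e) hwC hwD

end Is2ECOn

theorem restrictE_mono {E E' : Set (V × V)} (hE : E ⊆ E') (C : Set V) :
    restrictE E C ⊆ restrictE E' C :=
  fun _ ⟨he, hC⟩ => ⟨hE he, hC⟩

theorem restrictE_union_subset (E : Set (V × V)) (C D : Set V) :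
    restrictE E C ∪ restrictE E D ⊆ restrictE E (C ∪ D) := by
  rintro e (⟨he, h1, h2⟩ | ⟨he, h1, h2⟩)
  · exact ⟨he, Or.inl h1, Or.inl h2⟩
  · exact ⟨he, Or.inr h1, Or.inr h2⟩

theorem restrictE_fiber {V' : Type*} (h : V → V') (E : Set (V × V)) (u : V) :
    restrictE E {v | h v = h u} = {e ∈ {e ∈ E | h e.1 = h e.2} | h e.1 = h u} := by
  ext e
  simp only [restrictE, Set.mem_ofPred_eq]
  constructor
  · rintro ⟨he, h1, h2⟩
    exact ⟨⟨he, h1.trans h2.symm⟩, h1⟩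
  · rintro ⟨⟨he, h12⟩, h1⟩
    exact ⟨he, h1, h12.symm.trans h1⟩

namespace Is2ECComponent

variable {V' : Type*} {h : V → V'} {E E' : Set (V × V)} {C : Set V}

theorem of_subset (hE' : E' ⊆ E) (hC : Is2ECComponent E C)
    (hC' : Is2ECOn (restrictE E' C) C) : Is2ECComponent E' C :=
  ⟨hC', fun D hCD hD => hC.2 D hCD (hD.mono_s13 (restrictE_mono hE' D))⟩

theorem eq_fiber (hfib : ∀ u : V, Is2ECComponent E {v | h v = h u})
    (hC : Is2ECComponent E C) {u : V} (hu : u ∈ C) : C = {v | h v = h u} := by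
  set Cu : Set V := {v | h v = h u}
  have hunion : Is2ECOn (restrictE E (C ∪ Cu)) (C ∪ Cu) :=
    (hC.1.union (hfib u).1 hu rfl).mono_s13 (restrictE_union_subset E C Cu)
  rw [← hC.2 _ Set.subset_union_left hunion, (hfib u).2 _ Set.subset_union_right hunion]

theorem of_fibers (hE : ∀ u : V, Is2ECComponent E {v | h v = h u})
    (hE' : ∀ u : V, Is2ECComponent E' {v | h v = h u}) (hC : Is2ECComponent E C) :
    Is2ECComponent E' C := by
  rcases C.eq_empty_or_nonempty with rfl | ⟨u, hu⟩
  · -- `∅` can be a component only when `V` is empty, and then it is not a fibre.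
    have : IsEmpty V := ⟨fun v => by
      have hv : v ∈ {w | h w = h v} := rfl
      rwa [hC.2 _ (Set.empty_subset _) (hE v).1] at hv⟩
    exact ⟨⟨fun u => isEmptyElim u, fun _ _ u => isEmptyElim u⟩,
      fun _ _ _ => Subsingleton.elim _ _⟩
  · rw [hC.eq_fiber hE hu]
    exact hE' u

end Is2ECComponent

section Condensation

variable {V' : Type*} (h : V → V')

theorem reaches_quotE_of_isWalk {E : Set (V × V)} {u v : V} {p : List (V × V)}
    (hp : IsWalk E u v p) : Reaches (quotE h {e ∈ E | h e.1 ≠ h e.2}) (h u) (h v) := by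
  induction hp with
  | nil u => exact .refl _ _
  | @cons u x _ _ he _ ih =>
    by_cases hux : h u = h x
    · rwa [hux]
    · have hedge : (h u, h x) ∈ quotE h {e ∈ E | h e.1 ≠ h e.2} :=
        ⟨(u, x), ⟨he, hux⟩, rfl, rfl, hux⟩
      exact (Reaches.of_mem hedge).trans ih

theorem stronglyConnected_quotE {E : Set (V × V)} (hsurj : Function.Surjective h)
    (hE : StronglyConnected E) : StronglyConnected (quotE h {e ∈ E | h e.1 ≠ h e.2}) := by
  intro a b
  obtain ⟨u, rfl⟩ := hsurj a
  obtain ⟨v, rfl⟩ := hsurj b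
  obtain ⟨p, hp⟩ := hE u v
  exact reaches_quotE_of_isWalk h hp

theorem reaches_of_reaches_quotE {F P : Set (V × V)} (hFP : F ⊆ P)
    (hfib : ∀ u v : V, h u = h v → Reaches P u v) {a b : V'} {q : List (V' × V')}
    (hq : IsWalk (quotE h F) a b q) : ∀ u v : V, h u = a → h v = b → Reaches P u v := by
  induction hq with
  | nil a => exact fun u v hu hv => hfib u v (hu.trans hv.symm)
  | cons hab _ ih =>
    rintro u v rfl hv
    obtain ⟨e, heF, he1, he2, _⟩ := hab
    exact (hfib u e.1 he1.symm).trans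
      ((Reaches.of_mem (hFP heF)).trans (ih e.2 v he2 hv))

theorem stronglyConnected_of_quotE {F P : Set (V × V)} (hFP : F ⊆ P)
    (hfib : ∀ u v : V, h u = h v → Reaches P u v) (hF : StronglyConnected (quotE h F)) :
    StronglyConnected P := by
  intro u v
  obtain ⟨_, hq⟩ := hF (h u) (h v)
  exact reaches_of_reaches_quotE h hFP hfib hq u v rfl rfl

end Condensation

theorem mul_ncard_le_mul_ncard_of_fiberwise {α β : Type*} [Fintype α] (f : α → β)
    {S T : Set α} {c d : ℕ}
    (hfib : ∀ b, c * {x ∈ S | f x = b}.ncard ≤ d * {x ∈ T | f x = b}.ncard) :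
    c * S.ncard ≤ d * T.ncard := by
  classical
  have hsum : ∀ X : Set α, X.ncard = ∑ b ∈ Finset.univ.image f, {x ∈ X | f x = b}.ncard := by
    intro X
    rw [Set.ncard_eq_toFinset_card' X, Finset.card_eq_sum_card_fiberwise
      fun x _ => Finset.mem_image_of_mem f (Finset.mem_univ x)]
    refine Finset.sum_congr rfl fun b _ => ?_
    rw [Set.ncard_eq_toFinset_card']
    congr 1
    ext
    simp
  rw [hsum S, hsum T, Finset.mul_sum, Finset.mul_sum]
  exact Finset.sum_le_sum fun b _ => hfib b

theorem ncard_sep_add_ncard_sep_not {α : Type*} [Finite α] (X : Set α) (p : α → Prop) :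
    {x ∈ X | p x}.ncard + {x ∈ X | ¬ p x}.ncard = X.ncard :=
  Set.ncard_inter_add_ncard_sdiff_eq_ncard X {x | p x}

theorem stmt13_general {V' : Type*} [Fintype V] (E : Set (V × V)) (h : V → V')
    (hsurj : Function.Surjective h)
    (hcomp : ∀ u : V, Is2ECComponent E {v | h v = h u})
    (K F : Set (V × V)) (hK : K ⊆ E) (hKin : ∀ e ∈ K, h e.1 = h e.2)
    (hK2 : ∀ C : Set V, Is2ECComponent E C → Is2ECOn (restrictE K C) C)
    (hKapx : ∀ C : Set V, Is2ECComponent E C →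
      ∀ L : Set (V × V), L ⊆ restrictE E C → Is2ECOn L C →
        2 * (restrictE K C).ncard ≤ 3 * L.ncard)
    (hF : F ⊆ {e ∈ E | h e.1 ≠ h e.2})
    (hFsc : StronglyConnected (quotE h F))
    (hFapx : ∀ F' : Set (V × V), F' ⊆ {e ∈ E | h e.1 ≠ h e.2} →
      StronglyConnected (quotE h F') → 2 * F.ncard ≤ 3 * F'.ncard) :
    IsSolutionC E (F ∪ K) ∧
      ∀ E'' : Set (V × V), IsSolutionC E E'' →
        2 * (F ∪ K).ncard ≤ 3 * E''.ncard := by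
  have hFK : F ∪ K ⊆ E := Set.union_subset (fun e he => (hF he).1) hK
  have hfibers : ∀ u : V, Is2ECComponent (F ∪ K) {v | h v = h u} := fun u =>
    (hcomp u).of_subset hFK ((hK2 _ (hcomp u)).mono_s13 (restrictE_mono Set.subset_union_right _))
  have hsc : StronglyConnected (F ∪ K) :=
    stronglyConnected_of_quotE h Set.subset_union_left
      (fun u v huv => ((hK2 _ (hcomp u)).1 u rfl v huv.symm).mono_s13 fun e he => Or.inr he.1) hFsc
  refine ⟨⟨hFK, hsc, fun C => ⟨.of_fibers hcomp hfibers, .of_fibers hfibers hcomp⟩⟩, ?_⟩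
  rintro E'' ⟨hE'', hsc'', hcomp''⟩
  have hcross : 2 * F.ncard ≤ 3 * {e ∈ E'' | h e.1 ≠ h e.2}.ncard :=
    hFapx _ (fun e he => ⟨hE'' he.1, he.2⟩) (stronglyConnected_quotE h hsurj hsc'')
  have hinner : 2 * K.ncard ≤ 3 * {e ∈ E'' | h e.1 = h e.2}.ncard := by
    refine mul_ncard_le_mul_ncard_of_fiberwise (fun e => h e.1) fun a => ?_
    obtain ⟨u, rfl⟩ := hsurj a
    have hfiber := hKapx _ (hcomp u) _ (restrictE_mono hE'' _) ((hcomp'' _).1 (hcomp u)).1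
    rwa [restrictE_fiber, restrictE_fiber, Set.sep_eq_self_iff_mem_true.2 hKin] at hfiber
  have hdisj : Disjoint F K := Set.disjoint_left.2 fun e heF heK => (hF heF).2 (hKin e heK)
  have hsplit := ncard_sep_add_ncard_sep_not E'' fun e => h e.1 = h e.2
  simp only [← ne_eq] at hsplit
  rw [Set.ncard_union_eq hdisj]
  omega

theorem stmt13 {V' : Type*} [Fintype V] (E : Set (V × V)) (h : V → V')
    (hsurj : Function.Surjective h)
    (hSC : StronglyConnected E)
    (hcomp : ∀ u : V, Is2ECComponent E {v | h v = h u})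
    (K F : Set (V × V)) (hK : K ⊆ E) (hKin : ∀ e ∈ K, h e.1 = h e.2)
    (hK2 : ∀ C : Set V, Is2ECComponent E C → Is2ECOn (restrictE K C) C)
    (hKapx : ∀ C : Set V, Is2ECComponent E C →
      ∀ L : Set (V × V), L ⊆ restrictE E C → Is2ECOn L C →
        2 * (restrictE K C).ncard ≤ 3 * L.ncard)
    (hF : F ⊆ {e ∈ E | h e.1 ≠ h e.2})
    (hFinj : ∀ e₁ ∈ F, ∀ e₂ ∈ F, h e₁.1 = h e₂.1 → h e₁.2 = h e₂.2 → e₁ = e₂)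
    (hFsc : StronglyConnected (quotE h F))
    (hFapx : ∀ F' : Set (V × V), F' ⊆ {e ∈ E | h e.1 ≠ h e.2} →
      StronglyConnected (quotE h F') → 2 * F.ncard ≤ 3 * F'.ncard) :
    IsSolutionC E (F ∪ K) ∧
      ∀ E'' : Set (V × V), IsSolutionC E E'' →
        2 * (F ∪ K).ncard ≤ 3 * E''.ncard :=
  stmt13_general E h hsurj hcomp K F hK hKin hK2 hKapx hF hFsc hFapx
end
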